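/- arXiv:2106.11200 — 2 statements merged into one kernel-verified Lean document; each statement's English description precedes it below -/
import Mathlib

section
/- Core probability estimate in the impossibility of p-Rabin Oblivious String Transfer (Theorem: impossibility of OT^{p,s}): let (Ω, 𝓕, ℙ) be a probability space, α a nonempty finite type (the message alphabet, e.g. bit strings of length s, so that |α| = 2^s), p ∈ [0,1], and D₁, D₂ ∈ 𝓕 independent events with ℙ(D₁) = 1 − p and ℙ(D₂) = p. Let x_A, x_B : Ω → α be random variables such that, under the conditional probability measure ℙ(· | D₁ ∩ D₂), x_A is uniformly distributed on α and independent of x_B. Then ℙ(x_A ≠ x_B) ≥ (1 − 1/|α|)·p·(1 − p). (This forces ε ≥ (1/3)(1 − 2^{−s})·p·(1−p) for any ε-construction of the p-Rabin oblivious transfer of s-bit strings.) -/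
open MeasureTheory ProbabilityTheory

/-- Core probability estimate in the impossibility of `p`-Rabin Oblivious
String Transfer: if `D₁, D₂` are independent events of probabilities `1 − p`
and `p`, and under `P[·|D₁ ∩ D₂]` the message `x_A` is uniform on the finite
alphabet `α` and independent of `x_B`, then
`P(x_A ≠ x_B) ≥ (1 − 1/|α|)·p·(1 − p)`. -/
theorem rabin_string_impossibility_estimate {Ω α : Type*} [MeasurableSpace Ω]
    [MeasurableSpace α] [MeasurableSingletonClass α] [Fintype α] [Nonempty α]
    (P : Measure Ω) [IsProbabilityMeasure P]
    (p : ℝ) (hp : p ∈ Set.Icc (0 : ℝ) 1)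
    (D₁ D₂ : Set Ω) (hD₁ : MeasurableSet D₁) (hD₂ : MeasurableSet D₂)
    (hPD₁ : P D₁ = ENNReal.ofReal (1 - p)) (hPD₂ : P D₂ = ENNReal.ofReal p)
    (hDindep : P (D₁ ∩ D₂) = P D₁ * P D₂)
    (xA xB : Ω → α) (hxA : Measurable xA) (hxB : Measurable xB)
    (hunif : ∀ a : α,
      ProbabilityTheory.cond P (D₁ ∩ D₂) {ω | xA ω = a} =
        (Fintype.card α : ENNReal)⁻¹)
    (hindep : IndepFun xA xB (ProbabilityTheory.cond P (D₁ ∩ D₂))) :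
    (1 - 1 / (Fintype.card α : ℝ)) * p * (1 - p) ≤
      (P {ω | xA ω ≠ xB ω}).toReal := by
  obtain ⟨hp0, hp1⟩ := hp
  set E := D₁ ∩ D₂ with hEdef
  have hE : MeasurableSet E := hD₁.inter hD₂
  set μ := ProbabilityTheory.cond P E with hμdef
  set n : ℕ := Fintype.card α with hn
  have hnpos : 0 < n := Fintype.card_pos
  -- P E ≠ 0
  have hPE_ne : P E ≠ 0 := by
    intro h0
    have hz : μ {ω | xA ω = Classical.arbitrary α} = 0 := by
      rw [hμdef, ProbabilityTheory.cond_apply hE]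
      have : P (E ∩ {ω | xA ω = Classical.arbitrary α}) = 0 :=
        le_antisymm (h0 ▸ measure_mono Set.inter_subset_left) bot_le
      rw [this, mul_zero]
    rw [hunif] at hz
    exact (ENNReal.inv_ne_zero.mpr (by simp)) hz
  haveI : IsProbabilityMeasure μ := ProbabilityTheory.cond_isProbabilityMeasure hPE_ne
  -- μ {xA = xB} = n⁻¹
  have hset : {ω | xA ω = xB ω} = ⋃ a : α, xA ⁻¹' {a} ∩ xB ⁻¹' {a} := by
    ext ω; simp [eq_comm]
  have hmeasEq : MeasurableSet {ω | xA ω = xB ω} := by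
    rw [hset]
    exact MeasurableSet.iUnion fun a =>
      (hxA (measurableSet_singleton a)).inter (hxB (measurableSet_singleton a))
  have heq : μ {ω | xA ω = xB ω} = (n : ENNReal)⁻¹ := by
    rw [hset, measure_iUnion ?_ ?_]
    · have hterm : ∀ a : α, μ (xA ⁻¹' {a} ∩ xB ⁻¹' {a}) =
          (n : ENNReal)⁻¹ * μ (xB ⁻¹' {a}) := by
        intro a
        rw [(ProbabilityTheory.indepFun_iff_measure_inter_preimage_eq_mul.mp hindep)
            {a} {a} (measurableSet_singleton a) (measurableSet_singleton a)]
        congr 1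
        exact hunif a
      rw [tsum_fintype]
      simp_rw [hterm]
      rw [← Finset.mul_sum]
      have : ∑ a : α, μ (xB ⁻¹' {a}) = 1 := by
        rw [← measure_univ (μ := μ)]
        rw [← measure_biUnion_finset ?_ ?_]
        · congr 1; ext ω; simp
        · intro a _ b _ hab
          exact Set.disjoint_left.mpr fun ω h1 h2 => hab (h1.symm.trans h2)
        · intro a _; exact hxB (measurableSet_singleton a)
      rw [this, mul_one]
    · intro a b hab
      exact Set.disjoint_left.mpr fun ω h1 h2 => hab (h1.1.symm.trans h2.1)
    · intro a
      exact (hxA (measurableSet_singleton a)).inter (hxB (measurableSet_singleton a))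
  have hne : μ {ω | xA ω ≠ xB ω} = 1 - (n : ENNReal)⁻¹ := by
    have : {ω | xA ω ≠ xB ω} = {ω | xA ω = xB ω}ᶜ := rfl
    rw [this, measure_compl hmeasEq (measure_ne_top _ _), heq, measure_univ]
  -- P(E ∩ {xA ≠ xB}) = P E * μ {xA ≠ xB}
  have hcond : P (E ∩ {ω | xA ω ≠ xB ω}) = P E * μ {ω | xA ω ≠ xB ω} := by
    rw [hμdef, ProbabilityTheory.cond_apply hE, ← mul_assoc,
      ENNReal.mul_inv_cancel hPE_ne (measure_ne_top _ _), one_mul]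
  have hPE : P E = ENNReal.ofReal ((1 - p) * p) := by
    rw [hEdef, hDindep, hPD₁, hPD₂, ← ENNReal.ofReal_mul (by linarith)]
  have hmono : P (E ∩ {ω | xA ω ≠ xB ω}) ≤ P {ω | xA ω ≠ xB ω} :=
    measure_mono Set.inter_subset_right
  have hfin : (P (E ∩ {ω | xA ω ≠ xB ω})).toReal ≤ (P {ω | xA ω ≠ xB ω}).toReal :=
    ENNReal.toReal_mono (measure_ne_top _ _) hmono
  refine le_trans ?_ hfin
  rw [hcond, hne, hPE, ENNReal.toReal_mul, ENNReal.toReal_ofReal (by nlinarith)]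
  have hinv : ((1 : ENNReal) - (n : ENNReal)⁻¹).toReal = 1 - 1 / (n : ℝ) := by
    rw [ENNReal.toReal_sub_of_le ?_ (by simp)]
    · simp [ENNReal.toReal_inv, one_div]
    · exact ENNReal.inv_le_one.mpr (by exact_mod_cast hnpos)
  rw [hinv]
  ring_nf
  exact le_refl _
end

section
/- Core probability estimate in the impossibility of two-party AND computation (Theorem: impossibility of C^{and}): let (Ω, 𝓕, ℙ) be a probability space and x, y, y', x' : Ω → Bool random variables such that x and y' are independent and each uniformly distributed on Bool, and y is independent of the pair (x, y'). Then ℙ( {x ∧ y ≠ x ∧ y'} ∪ {x' ∧ y' ≠ x ∧ y'} ) ≥ 1/4, where ∧ denotes the boolean AND (multiplication of bits). (In the paper, x and y' are the bits the distinguisher inputs to C^{and}_B and C^{and}_A respectively, y is the bit the simulator sends to C^{and}_B, and x' the bit it sends to C^{and}_A; the independence of y from (x, y') reflects the causal constraint that the simulator outputs y before learning x·y'. This forces ε ≥ 1/12 for any ε-construction of the two-party AND computation.) -/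
open MeasureTheory ProbabilityTheory

/-- Core probability estimate in the impossibility of two-party AND
computation: if `x` and `y'` are independent uniform bits and `y` is
independent of the pair `(x, y')`, then
`P({x ∧ y ≠ x ∧ y'} ∪ {x' ∧ y' ≠ x ∧ y'}) ≥ 1/4`. -/
theorem and_computation_impossibility_estimate {Ω : Type*} [MeasurableSpace Ω]
    (P : Measure Ω) [IsProbabilityMeasure P]
    (x y y' x' : Ω → Bool)
    (hx : Measurable x) (hy : Measurable y) (hy' : Measurable y')
    (hx' : Measurable x')
    (hxunif : ∀ b : Bool, P {ω | x ω = b} = 1 / 2)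
    (hy'unif : ∀ b : Bool, P {ω | y' ω = b} = 1 / 2)
    (hxy'indep : IndepFun x y' P)
    (hyindep : IndepFun y (fun ω => (x ω, y' ω)) P) :
    1 / 4 ≤ P ({ω | (x ω && y ω) ≠ (x ω && y' ω)} ∪
      {ω | (x' ω && y' ω) ≠ (x ω && y' ω)}) := by
  classical
  -- probability of S b := {y = b ∧ x = true ∧ y' = !b}
  have hpair : ∀ b : Bool,
      P ((fun ω => (x ω, y' ω)) ⁻¹' ({(true, !b)} : Set (Bool × Bool))) = 1 / 4 := by
    intro b
    have hset : (fun ω => (x ω, y' ω)) ⁻¹' ({(true, !b)} : Set (Bool × Bool))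
        = x ⁻¹' {true} ∩ y' ⁻¹' {!b} := by
      ext ω; simp [Prod.ext_iff]
    rw [hset, hxy'indep.measure_inter_preimage_eq_mul _ _
      (measurableSet_singleton _) (measurableSet_singleton _)]
    have h1 : P (x ⁻¹' {true}) = 1 / 2 := hxunif true
    have h2 : P (y' ⁻¹' {!b}) = 1 / 2 := hy'unif (!b)
    rw [h1, h2]
    have : ((1 : ENNReal) / 2) * (1 / 2) = 1 / 4 := by
      simp [one_div, ← ENNReal.mul_inv]; norm_num
    exact this
  have hS : ∀ b : Bool,
      P (y ⁻¹' {b} ∩ (fun ω => (x ω, y' ω)) ⁻¹' ({(true, !b)} : Set (Bool × Bool)))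
        = P (y ⁻¹' {b}) * (1 / 4) := by
    intro b
    rw [hyindep.measure_inter_preimage_eq_mul _ _
      (measurableSet_singleton _) (measurableSet_singleton _), hpair b]
  -- the first event as a disjoint union
  have hAeq : {ω | (x ω && y ω) ≠ (x ω && y' ω)}
      = (y ⁻¹' {true} ∩ (fun ω => (x ω, y' ω)) ⁻¹' ({(true, !true)} : Set (Bool × Bool)))
        ∪ (y ⁻¹' {false} ∩ (fun ω => (x ω, y' ω)) ⁻¹' ({(true, !false)} : Set (Bool × Bool))) := by
    ext ω
    simp only [Set.mem_setOf_eq, Set.mem_union, Set.mem_inter_iff, Set.mem_preimage,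
      Set.mem_singleton_iff, Prod.ext_iff]
    cases hxb : x ω <;> cases hyb : y ω <;> cases hy'b : y' ω <;> simp
  have hmeasPair : Measurable (fun ω => (x ω, y' ω)) := hx.prodMk hy'
  have hdisj : Disjoint
      (y ⁻¹' {true} ∩ (fun ω => (x ω, y' ω)) ⁻¹' ({(true, !true)} : Set (Bool × Bool)))
      (y ⁻¹' {false} ∩ (fun ω => (x ω, y' ω)) ⁻¹' ({(true, !false)} : Set (Bool × Bool))) := by
    apply Set.disjoint_left.2
    rintro ω ⟨h1, _⟩ ⟨h2, _⟩
    simp [Set.mem_preimage] at h1 h2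
    rw [h1] at h2; exact Bool.noConfusion h2
  have hy1 : P (y ⁻¹' {true}) + P (y ⁻¹' {false}) = 1 := by
    have hu : (y ⁻¹' {true}) ∪ (y ⁻¹' {false}) = Set.univ := by
      ext ω
      rcases Bool.eq_false_or_eq_true (y ω) with h | h <;> simp [h]
    have hd : Disjoint (y ⁻¹' {true}) (y ⁻¹' {false}) := by
      apply Set.disjoint_left.2
      intro ω h1 h2
      simp [Set.mem_preimage] at h1 h2
      rw [h1] at h2; exact Bool.noConfusion h2
    have := measure_union (μ := P) hd (hy (measurableSet_singleton _))
    rw [hu] at this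
    rw [← this, measure_univ]
  have hPA : P {ω | (x ω && y ω) ≠ (x ω && y' ω)} = 1 / 4 := by
    rw [hAeq, measure_union hdisj
      ((hy (measurableSet_singleton _)).inter (hmeasPair (measurableSet_singleton _))),
      hS true, hS false, ← add_mul, hy1, one_mul]
  calc (1 : ENNReal) / 4 = P {ω | (x ω && y ω) ≠ (x ω && y' ω)} := hPA.symm
    _ ≤ _ := measure_mono Set.subset_union_left
end
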